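/- (Lemma 4.3) In the q-boson algebra, (λ^{-1} b_+;q)_{α_2} = Σ_{0 ≤ γ_2 ≤ α_2} ν^{γ_2} ((λ;q)_{γ_2}(ν;q)_{α_2-γ_2}/(μ;q)_{α_2}) binom_q(α_2,γ_2) (μ^{-1}b_+;q)_{γ_2}(q^{γ_2} b_+;q)_{α_2-γ_2}, where ν = μ/λ. In particular this holds as a polynomial identity in a commuting variable b_+. -/

import Mathlib

open scoped BigOperators
open Polynomial Finset

noncomputable section

/-- The q-Pochhammer symbol `(z;q)_m = ∏_{j=0}^{m-1} (1 - z q^j)`. -/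
def qP (q z : ℝ) (m : ℕ) : ℝ := ∏ j ∈ Finset.range m, (1 - z * q ^ j)

/-- The q-binomial coefficient, zero outside `0 ≤ k ≤ m`. -/
def qBinom (q : ℝ) (m k : ℕ) : ℝ :=
  if k ≤ m then qP q q m / (qP q q k * qP q q (m - k)) else 0

lemma qP_zero (q z : ℝ) : qP q z 0 = 1 := by simp [qP]

lemma qP_succ (q z : ℝ) (m : ℕ) : qP q z (m+1) = qP q z m * (1 - z * q ^ m) :=
  Finset.prod_range_succ _ _

lemma qP_succ' (q z : ℝ) (m : ℕ) : qP q z (m+1) = (1 - z) * qP q (z*q) m := by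
  rw [qP, Finset.prod_range_succ', mul_comm]
  congr 1
  · norm_num
  · rw [qP]
    exact Finset.prod_congr rfl fun j _ => by ring_nf

lemma one_sub_q_pow_pos {q : ℝ} (hq0 : 0 < q) (hq1 : q < 1) {k : ℕ} (hk : 1 ≤ k) :
    0 < 1 - q ^ k := by
  have : q ^ k < 1 := pow_lt_one₀ hq0.le hq1 (by omega)
  linarith

lemma qP_q_pos {q : ℝ} (hq0 : 0 < q) (hq1 : q < 1) (k : ℕ) : 0 < qP q q k := by
  rw [qP]
  refine Finset.prod_pos fun j _ => ?_
  have : q * q ^ j = q ^ (j+1) := by ring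
  rw [this]
  exact one_sub_q_pow_pos hq0 hq1 (by omega)

lemma qP_q_ne_zero {q : ℝ} (hq0 : 0 < q) (hq1 : q < 1) (k : ℕ) : qP q q k ≠ 0 :=
  (qP_q_pos hq0 hq1 k).ne'

lemma qBinom_zero' (q : ℝ) (n : ℕ) (h : qP q q n ≠ 0) : qBinom q n 0 = 1 := by
  rw [qBinom, if_pos (Nat.zero_le n)]
  simp [qP_zero, div_self h]

lemma qBinom_self (q : ℝ) (n : ℕ) (h : qP q q n ≠ 0) : qBinom q n n = 1 := by
  rw [qBinom, if_pos le_rfl]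
  simp [qP_zero, div_self h]

lemma qBinom_big (q : ℝ) {n k : ℕ} (h : n < k) : qBinom q n k = 0 :=
  if_neg (by omega)

lemma qBinom_absorb {q : ℝ} (hq0 : 0 < q) (hq1 : q < 1) {n γ : ℕ} (h : γ < n) :
    qBinom q n (γ+1) * (1 - q^(γ+1)) = qBinom q n γ * (1 - q^(n-γ)) := by
  obtain ⟨k, rfl⟩ : ∃ k, n = γ+1+k := ⟨n-γ-1, by omega⟩
  have h1 : γ + 1 + k - (γ+1) = k := by omega
  have h2 : γ + 1 + k - γ = k + 1 := by omega
  rw [qBinom, qBinom, if_pos (by omega), if_pos (by omega), h1, h2]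
  have e1 : qP q q (γ+1) = qP q q γ * (1 - q^(γ+1)) := by rw [qP_succ]; ring_nf
  have e2 : qP q q (k+1) = qP q q k * (1 - q^(k+1)) := by rw [qP_succ]; ring_nf
  rw [e1, e2]
  have hg := qP_q_ne_zero hq0 hq1 γ
  have hk := qP_q_ne_zero hq0 hq1 k
  have hn := qP_q_ne_zero hq0 hq1 (γ+1+k)
  have n1 : (1 - q^(γ+1)) ≠ 0 := (one_sub_q_pow_pos hq0 hq1 (by omega)).ne'
  have n2 : (1 - q^(k+1)) ≠ 0 := (one_sub_q_pow_pos hq0 hq1 (by omega)).ne'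
  field_simp

lemma qBinom_pascal {q : ℝ} (hq0 : 0 < q) (hq1 : q < 1) {n γ : ℕ} (h : γ ≤ n) :
    qBinom q (n+1) (γ+1) = qBinom q n (γ+1) + q^(n-γ) * qBinom q n γ := by
  rcases eq_or_lt_of_le h with rfl | h
  · rw [qBinom_self q (γ+1) (qP_q_ne_zero hq0 hq1 _), qBinom_self q γ (qP_q_ne_zero hq0 hq1 _),
      qBinom_big q (by omega)]
    simp
  · obtain ⟨k, rfl⟩ : ∃ k, n = γ+1+k := ⟨n-γ-1, by omega⟩
    have h1 : γ + 1 + k + 1 - (γ+1) = k + 1 := by omega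
    have h2 : γ + 1 + k - (γ+1) = k := by omega
    have h3 : γ + 1 + k - γ = k + 1 := by omega
    rw [qBinom, qBinom, qBinom, if_pos (by omega), if_pos (by omega), if_pos (by omega),
      h1, h2, h3]
    have e0 : qP q q (γ+1+k+1) = qP q q (γ+1+k) * (1 - q^(γ+1+k+1)) := by rw [qP_succ]; ring_nf
    have e1 : qP q q (γ+1) = qP q q γ * (1 - q^(γ+1)) := by rw [qP_succ]; ring_nf
    have e2 : qP q q (k+1) = qP q q k * (1 - q^(k+1)) := by rw [qP_succ]; ring_nf
    rw [e0, e1, e2]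
    have hg := qP_q_ne_zero hq0 hq1 γ
    have hk := qP_q_ne_zero hq0 hq1 k
    have hn := qP_q_ne_zero hq0 hq1 (γ+1+k)
    have n1 : (1 - q^(γ+1)) ≠ 0 := (one_sub_q_pow_pos hq0 hq1 (by omega)).ne'
    have n2 : (1 - q^(k+1)) ≠ 0 := (one_sub_q_pow_pos hq0 hq1 (by omega)).ne'
    field_simp
    ring

lemma qVdm {q : ℝ} (hq0 : 0 < q) (hq1 : q < 1) (lam nu : ℝ) (n : ℕ) :
    ∑ γ ∈ Finset.range (n+1), qBinom q n γ * nu^γ * qP q lam γ * qP q nu (n-γ)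
      = qP q (lam*nu) n := by
  induction n with
  | zero => simp [qBinom_zero' q 0 (qP_q_ne_zero hq0 hq1 0), qP_zero]
  | succ n ih =>
    have hPne := qP_q_ne_zero hq0 hq1
    rw [Finset.sum_range_succ']
    have f0 : qBinom q (n+1) 0 * nu^0 * qP q lam 0 * qP q nu (n+1-0)
        = qBinom q n 0 * nu^0 * qP q lam 0 * qP q nu (n+1-0) := by
      rw [qBinom_zero' q (n+1) (hPne _), qBinom_zero' q n (hPne _)]
    rw [f0]
    have step : ∀ γ ∈ Finset.range (n+1),
        qBinom q (n+1) (γ+1) * nu^(γ+1) * qP q lam (γ+1) * qP q nu (n+1-(γ+1))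
        = qBinom q n (γ+1) * nu^(γ+1) * qP q lam (γ+1) * qP q nu (n+1-(γ+1))
          + q^(n-γ) * (qBinom q n γ * nu^(γ+1) * qP q lam (γ+1) * qP q nu (n-γ)) := by
      intro γ hγ
      have hγn : γ ≤ n := Nat.lt_succ_iff.mp (Finset.mem_range.mp hγ)
      have hsub : n + 1 - (γ+1) = n - γ := by omega
      rw [qBinom_pascal hq0 hq1 hγn, hsub]; ring
    rw [Finset.sum_congr rfl step, Finset.sum_add_distrib]
    have eA : (∑ γ ∈ Finset.range (n+1),
          qBinom q n (γ+1) * nu^(γ+1) * qP q lam (γ+1) * qP q nu (n+1-(γ+1)))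
          + qBinom q n 0 * nu^0 * qP q lam 0 * qP q nu (n+1-0)
        = ∑ γ ∈ Finset.range (n+1), qBinom q n γ * nu^γ * qP q lam γ * qP q nu (n+1-γ) := by
      have h2 := Finset.sum_range_succ'
        (fun γ => qBinom q n γ * nu^γ * qP q lam γ * qP q nu (n+1-γ)) (n+1)
      have h3 := Finset.sum_range_succ
        (fun γ => qBinom q n γ * nu^γ * qP q lam γ * qP q nu (n+1-γ)) (n+1)
      rw [h3, qBinom_big q (Nat.lt_succ_self n)] at h2
      simp only [zero_mul, add_zero] at h2
      exact h2.symm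
    rw [add_right_comm, eA, ← Finset.sum_add_distrib]
    have step2 : ∀ γ ∈ Finset.range (n+1),
        qBinom q n γ * nu^γ * qP q lam γ * qP q nu (n+1-γ)
          + q^(n-γ) * (qBinom q n γ * nu^(γ+1) * qP q lam (γ+1) * qP q nu (n-γ))
        = (1 - lam*nu*q^n) * (qBinom q n γ * nu^γ * qP q lam γ * qP q nu (n-γ)) := by
      intro γ hγ
      have hγn : γ ≤ n := Nat.lt_succ_iff.mp (Finset.mem_range.mp hγ)
      obtain ⟨k, rfl⟩ : ∃ k, n = γ + k := ⟨n - γ, by omega⟩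
      have hs1 : γ + k + 1 - γ = k + 1 := by omega
      have hs2 : γ + k - γ = k := by omega
      rw [hs1, hs2, qP_succ q nu k, qP_succ q lam γ]
      ring
    rw [Finset.sum_congr rfl step2, ← Finset.mul_sum, ih, qP_succ]
    ring

def Pq (q c : ℝ) (m : ℕ) : Polynomial ℝ :=
  ∏ j ∈ Finset.range m, (1 - Polynomial.C (c * q ^ j) * Polynomial.X)

lemma Pq_eval (q c : ℝ) (m : ℕ) (t : ℝ) : (Pq q c m).eval t = qP q (c*t) m := by
  rw [Pq, qP, Polynomial.eval_prod]
  refine Finset.prod_congr rfl fun j _ => ?_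
  simp
  ring

lemma natDegree_one_sub_C_mul_X (a : ℝ) :
    (1 - Polynomial.C a * Polynomial.X).natDegree ≤ 1 := by
  refine le_trans (Polynomial.natDegree_sub_le _ _) (max_le ?_ ?_)
  · simp
  · exact le_trans (Polynomial.natDegree_C_mul_le _ _) Polynomial.natDegree_X_le

lemma Pq_natDegree_le (q c : ℝ) (m : ℕ) : (Pq q c m).natDegree ≤ m := by
  refine le_trans (Polynomial.natDegree_prod_le _ _) (le_trans (Finset.sum_le_sum
    (fun j _ => natDegree_one_sub_C_mul_X (c * q ^ j))) ?_)
  simp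

lemma Pq_succ (q c : ℝ) (m : ℕ) :
    Pq q c (m+1) = Pq q c m * (1 - Polynomial.C (c * q ^ m) * Polynomial.X) :=
  Finset.prod_range_succ _ _

lemma Pq_succ' (q c : ℝ) (m : ℕ) :
    Pq q c (m+1) = (1 - Polynomial.C c * Polynomial.X) * Pq q (c*q) m := by
  rw [Pq, Finset.prod_range_succ', mul_comm]
  congr 1
  · norm_num
  · rw [Pq]
    refine Finset.prod_congr rfl fun j _ => ?_
    congr 2
    ring

lemma Pq_zero (q c : ℝ) : Pq q c 0 = 1 := by simp [Pq]

def cc (q lam mu : ℝ) (n γ : ℕ) : ℝ :=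
  qBinom q n γ * (mu/lam)^γ * qP q lam γ * qP q (mu/lam) (n-γ)

def dd (q lam mu : ℝ) (n γ : ℕ) : ℝ :=
  -(cc q lam mu n γ * (1 - q^γ) * (lam⁻¹ * q^(n-γ) - mu⁻¹))

lemma cc_top {q lam mu : ℝ} (n : ℕ) : cc q lam mu n (n+1) = 0 := by
  rw [cc, qBinom_big q (Nat.lt_succ_self n)]
  ring

lemma dd_zero {q lam mu : ℝ} (n : ℕ) : dd q lam mu n 0 = 0 := by
  simp [dd]

lemma dd_top {q lam mu : ℝ} (n : ℕ) : dd q lam mu n (n+1) = 0 := by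
  rw [dd, cc_top]
  ring

lemma dd_succ {q lam mu : ℝ} (hq0 : 0 < q) (hq1 : q < 1) (hlam : lam ≠ 0) (hmu : mu ≠ 0)
    {n γ : ℕ} (h : γ < n) :
    dd q lam mu n (γ+1) = cc q lam mu n γ * (1 - q^(n-γ)) * (lam⁻¹ - q^γ) := by
  obtain ⟨k, rfl⟩ : ∃ k, n = γ+1+k := ⟨n-γ-1, by omega⟩
  have hs1 : γ + 1 + k - (γ+1) = k := by omega
  have hs2 : γ + 1 + k - γ = k + 1 := by omega
  rw [dd, cc, cc, hs1, hs2]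
  have habs : qBinom q (γ+1+k) (γ+1) * (1 - q^(γ+1)) = qBinom q (γ+1+k) γ * (1 - q^(k+1)) := by
    have := qBinom_absorb hq0 hq1 (n := γ+1+k) (γ := γ) (by omega)
    rw [hs2] at this
    exact this
  rw [qP_succ q lam γ, qP_succ q (mu/lam) k]
  have expand : qBinom q (γ+1+k) (γ+1) * (mu / lam) ^ (γ + 1) * (qP q lam γ * (1 - lam * q ^ γ)) *
        qP q (mu / lam) k * (1 - q ^ (γ + 1)) * (lam⁻¹ * q ^ k - mu⁻¹)
      = (qBinom q (γ+1+k) (γ+1) * (1 - q^(γ+1))) * ((mu / lam) ^ (γ + 1) *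
        (qP q lam γ * (1 - lam * q ^ γ)) * qP q (mu / lam) k * (lam⁻¹ * q ^ k - mu⁻¹)) := by
    ring
  calc -(qBinom q (γ+1+k) (γ+1) * (mu / lam) ^ (γ + 1) * (qP q lam γ * (1 - lam * q ^ γ)) *
        qP q (mu / lam) k * (1 - q ^ (γ + 1)) * (lam⁻¹ * q ^ k - mu⁻¹))
      = -((qBinom q (γ+1+k) γ * (1 - q^(k+1))) * ((mu / lam) ^ (γ + 1) *
        (qP q lam γ * (1 - lam * q ^ γ)) * qP q (mu / lam) k * (lam⁻¹ * q ^ k - mu⁻¹))) := by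
        rw [expand, habs]
    _ = qBinom q (γ+1+k) γ * (mu / lam) ^ γ * qP q lam γ *
        (qP q (mu / lam) k * (1 - mu / lam * q ^ k)) * (1 - q ^ (k + 1)) * (lam⁻¹ - q ^ γ) := by
        generalize qBinom q (γ+1+k) γ = B
        generalize qP q lam γ = P
        generalize qP q (mu / lam) k = Q
        have hlg : lam ^ γ ≠ 0 := pow_ne_zero _ hlam
        simp only [div_pow, pow_succ]
        field_simp
        ring

lemma key {q lam mu : ℝ} (hq0 : 0 < q) (hq1 : q < 1) (hlam : lam ≠ 0) (hmu : mu ≠ 0)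
    (n γ : ℕ) (hγ : γ ≤ n) :
    (1 - C mu⁻¹ * X) * ((1 - C (lam⁻¹ * q^n) * X) *
        (C (cc q lam mu n γ) * (Pq q mu⁻¹ γ * Pq q (q^γ) (n-γ))))
    - (1 - C mu⁻¹ * X) * ((1 - C lam⁻¹ * X) *
        (C (cc q lam mu n γ) * (Pq q (mu⁻¹*q) γ * Pq q (q^(γ+1)) (n-γ))))
    = (X * C (dd q lam mu n (γ+1)) * (Pq q mu⁻¹ (γ+1) * Pq q (q^(γ+1)) (n-(γ+1))))
      - (X * C (dd q lam mu n γ) * (Pq q mu⁻¹ γ * Pq q (q^γ) (n-γ))) := by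
  have e2 : (1 - C mu⁻¹ * X) * (Pq q (mu⁻¹*q) γ)
      = Pq q mu⁻¹ γ * (1 - C mu⁻¹ * C q ^ γ * X) := by
    rw [← Pq_succ', Pq_succ, Polynomial.C_mul, Polynomial.C_pow]
  have ePμ : Pq q mu⁻¹ (γ+1) = Pq q mu⁻¹ γ * (1 - C mu⁻¹ * C q ^ γ * X) := by
    rw [Pq_succ, Polynomial.C_mul, Polynomial.C_pow]
  rcases eq_or_lt_of_le hγ with rfl | hlt
  · have hs0 : γ - (γ+1) = 0 := by omega
    rw [Nat.sub_self, hs0]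
    simp only [Pq_zero]
    rw [dd_top, ePμ]
    have hdd : dd q lam mu γ γ = -(cc q lam mu γ γ * (1 - q^γ) * (lam⁻¹ * 1 - mu⁻¹)) := by
      rw [dd, Nat.sub_self, pow_zero]
    rw [hdd]
    simp only [map_neg, map_mul, map_sub, map_one, map_pow, map_zero]
    linear_combination (-(1 - C lam⁻¹ * X) * C (cc q lam mu γ γ)) * e2
  · obtain ⟨k, rfl⟩ : ∃ k, n = γ+1+k := ⟨n-γ-1, by omega⟩
    have hs1 : γ + 1 + k - (γ+1) = k := by omega
    have hs2 : γ + 1 + k - γ = k + 1 := by omega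
    have hdd1 : dd q lam mu (γ+1+k) (γ+1)
        = cc q lam mu (γ+1+k) γ * (1 - q^(k+1)) * (lam⁻¹ - q^γ) := by
      rw [dd_succ hq0 hq1 hlam hmu (by omega), hs2]
    have hdd0 : dd q lam mu (γ+1+k) γ
        = -(cc q lam mu (γ+1+k) γ * (1 - q^γ) * (lam⁻¹ * q^(k+1) - mu⁻¹)) := by
      rw [dd, hs2]
    have eQ1 : Pq q (q^γ) (k+1) = (1 - C q ^ γ * X) * Pq q (q^(γ+1)) k := by
      rw [Pq_succ', ← pow_succ, Polynomial.C_pow]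
    have eQ2 : Pq q (q^(γ+1)) (k+1)
        = Pq q (q^(γ+1)) k * (1 - C q ^ (γ+1) * C q ^ k * X) := by
      rw [Pq_succ q (q^(γ+1)) k, Polynomial.C_mul, Polynomial.C_pow, Polynomial.C_pow]
    rw [hs1, hs2, hdd1, hdd0, eQ1, eQ2, ePμ]
    simp only [map_neg, map_mul, map_sub, map_one, map_pow]
    linear_combination (-(1 - C lam⁻¹ * X) * C (cc q lam mu (γ+1+k) γ) *
      (Pq q (q^(γ+1)) k * (1 - (C q)^(γ+1) * (C q)^k * X))) * e2

lemma funeq {q lam mu : ℝ} (hq0 : 0 < q) (hq1 : q < 1) (hlam : lam ≠ 0) (hmu : mu ≠ 0)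
    (n : ℕ) :
    (1 - C (lam⁻¹ * q^n) * X) *
      ∑ γ ∈ Finset.range (n+1), C (cc q lam mu n γ) * (Pq q mu⁻¹ γ * Pq q (q^γ) (n-γ))
    = (1 - C lam⁻¹ * X) *
      ∑ γ ∈ Finset.range (n+1), C (cc q lam mu n γ) * (Pq q (mu⁻¹*q) γ * Pq q (q^(γ+1)) (n-γ)) := by
  have hM : (1 - C mu⁻¹ * X : Polynomial ℝ) ≠ 0 := by
    intro h
    have := congrArg (Polynomial.eval 0) h
    simp at this
  apply mul_left_cancel₀ hM
  rw [← sub_eq_zero, Finset.mul_sum, Finset.mul_sum, Finset.mul_sum, Finset.mul_sum,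
    ← Finset.sum_sub_distrib]
  have := Finset.sum_congr rfl (fun γ hγ =>
    key hq0 hq1 hlam hmu n γ (Nat.lt_succ_iff.mp (Finset.mem_range.mp hγ)))
  rw [this, Finset.sum_range_sub
    (f := fun γ => X * C (dd q lam mu n γ) * (Pq q mu⁻¹ γ * Pq q (q^γ) (n-γ))),
    dd_top, dd_zero]
  simp

lemma qP_zero_arg (q : ℝ) (m : ℕ) : qP q 0 m = 1 := by simp [qP]

lemma main_poly {q lam mu : ℝ} (hq0 : 0 < q) (hq1 : q < 1) (hlam : lam ≠ 0) (hmu : mu ≠ 0)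
    (n : ℕ) :
    C (qP q mu n) * Pq q lam⁻¹ n
      = ∑ γ ∈ Finset.range (n+1), C (cc q lam mu n γ) * (Pq q mu⁻¹ γ * Pq q (q^γ) (n-γ)) := by
  have hqne : q ≠ 0 := ne_of_gt hq0
  rw [← sub_eq_zero]
  set Dp := C (qP q mu n) * Pq q lam⁻¹ n - ∑ γ ∈ Finset.range (n+1),
      C (cc q lam mu n γ) * (Pq q mu⁻¹ γ * Pq q (q^γ) (n-γ)) with hDp
  set Dp' := C (qP q mu n) * Pq q (lam⁻¹*q) n - ∑ γ ∈ Finset.range (n+1),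
      C (cc q lam mu n γ) * (Pq q (mu⁻¹*q) γ * Pq q (q^(γ+1)) (n-γ)) with hDp'
  have hLfe : (1 - C (lam⁻¹ * q^n) * X) * Pq q lam⁻¹ n
      = (1 - C lam⁻¹ * X) * Pq q (lam⁻¹*q) n := by
    have h1 : Pq q lam⁻¹ (n+1) = Pq q lam⁻¹ n * (1 - C (lam⁻¹*q^n) * X) := Pq_succ q lam⁻¹ n
    have h2 : Pq q lam⁻¹ (n+1) = (1 - C lam⁻¹ * X) * Pq q (lam⁻¹*q) n := Pq_succ' q lam⁻¹ n
    linear_combination h2 - h1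
  have Feq : (1 - C (lam⁻¹*q^n) * X) * Dp = (1 - C lam⁻¹ * X) * Dp' := by
    rw [hDp, hDp', mul_sub, mul_sub, funeq hq0 hq1 hlam hmu n]
    refine congrArg₂ (· - ·) ?_ rfl
    calc (1 - C (lam⁻¹*q^n) * X) * (C (qP q mu n) * Pq q lam⁻¹ n)
        = C (qP q mu n) * ((1 - C (lam⁻¹*q^n) * X) * Pq q lam⁻¹ n) := by ring
      _ = C (qP q mu n) * ((1 - C lam⁻¹ * X) * Pq q (lam⁻¹*q) n) := by rw [hLfe]
      _ = (1 - C lam⁻¹ * X) * (C (qP q mu n) * Pq q (lam⁻¹*q) n) := by ring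
  have hE' : ∀ t, Dp'.eval t = Dp.eval (q*t) := by
    intro t
    rw [hDp, hDp']
    simp only [Polynomial.eval_sub, Polynomial.eval_mul, Polynomial.eval_C,
      Polynomial.eval_finset_sum, Pq_eval]
    refine congrArg₂ (· - ·) ?_ ?_
    · rw [mul_assoc]
    · refine Finset.sum_congr rfl fun γ _ => ?_
      rw [mul_assoc, show q^(γ+1)*t = q^γ*(q*t) from by ring]
  have rel : ∀ t, (1 - lam⁻¹*q^n*t) * Dp.eval t = (1 - lam⁻¹*t) * Dp.eval (q*t) := by
    intro t
    have h := congrArg (Polynomial.eval t) Feq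
    simp only [Polynomial.eval_mul, Polynomial.eval_sub, Polynomial.eval_one,
      Polynomial.eval_C, Polynomial.eval_X] at h
    rw [hE' t] at h
    exact h
  have roots : ∀ i, i < n → Dp.eval (lam * (q⁻¹)^i) = 0 := by
    intro i
    induction i with
    | zero =>
      intro h0i
      have h := rel lam
      have hc : (1:ℝ) - lam⁻¹*lam = 0 := by rw [inv_mul_cancel₀ hlam, sub_self]
      rw [hc, zero_mul] at h
      rw [show lam⁻¹*q^n*lam = q^n from by field_simp] at h
      have hne : (1:ℝ) - q^n ≠ 0 := (one_sub_q_pow_pos hq0 hq1 (by omega)).ne'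
      have := (mul_eq_zero.mp h).resolve_left hne
      simpa using this
    | succ i ih =>
      intro hi
      have h := rel (lam * (q⁻¹)^(i+1))
      have e1 : q * (lam * (q⁻¹)^(i+1)) = lam * (q⁻¹)^i := by
        rw [pow_succ]
        field_simp
      rw [e1, ih (by omega), mul_zero] at h
      have e2 : 1 - lam⁻¹*q^n*(lam * (q⁻¹)^(i+1)) = 1 - q^(n-(i+1)) := by
        have hqq : q^n = q^(n-(i+1)) * q^(i+1) := by
          rw [← pow_add]
          congr 1
          omega
        rw [hqq, inv_pow]
        have hp : (q^(i+1) : ℝ) ≠ 0 := pow_ne_zero _ hqne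
        field_simp
      rw [e2] at h
      have hne : (1:ℝ) - q^(n-(i+1)) ≠ 0 := (one_sub_q_pow_pos hq0 hq1 (by omega)).ne'
      exact (mul_eq_zero.mp h).resolve_left hne
  have h0 : Dp.eval 0 = 0 := by
    rw [hDp]
    simp only [Polynomial.eval_sub, Polynomial.eval_mul, Polynomial.eval_C,
      Polynomial.eval_finset_sum, Pq_eval, mul_zero, qP_zero_arg, mul_one]
    rw [sub_eq_zero]
    have hv := qVdm hq0 hq1 lam (mu/lam) n
    rw [show lam * (mu/lam) = mu from mul_div_cancel₀ mu hlam] at hv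
    rw [← hv]
    exact Finset.sum_congr rfl fun γ _ => by rw [cc]
  have hdeg : Dp.natDegree ≤ n := by
    rw [hDp]
    refine le_trans (Polynomial.natDegree_sub_le _ _) (max_le ?_ ?_)
    · exact le_trans (Polynomial.natDegree_C_mul_le _ _) (Pq_natDegree_le _ _ _)
    · refine Polynomial.natDegree_sum_le_of_forall_le _ _ fun γ hγ => ?_
      refine le_trans (Polynomial.natDegree_C_mul_le _ _) ?_
      refine le_trans Polynomial.natDegree_mul_le ?_
      have h1 := Pq_natDegree_le q mu⁻¹ γ
      have h2 := Pq_natDegree_le q (q^γ) (n-γ)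
      have hγn : γ ≤ n := Nat.lt_succ_iff.mp (Finset.mem_range.mp hγ)
      omega
  have hinj : Set.InjOn (fun i : ℕ => lam * (q⁻¹)^i) (Finset.range n) := by
    intro i _ j _ hij
    have h1 : (1:ℝ) < q⁻¹ := (one_lt_inv₀ hq0).mpr hq1
    have hmono : StrictMono (fun i : ℕ => (q⁻¹:ℝ)^i) := fun a b hab => by
      exact pow_lt_pow_right₀ h1 hab
    exact hmono.injective (mul_left_cancel₀ hlam hij)
  apply Polynomial.eq_zero_of_natDegree_lt_card_of_eval_eq_zero' Dp
    (insert (0:ℝ) ((Finset.range n).image fun i => lam * (q⁻¹)^i))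
  · intro x hx
    rcases Finset.mem_insert.mp hx with rfl | hx
    · exact h0
    · obtain ⟨i, hi, rfl⟩ := Finset.mem_image.mp hx
      exact roots i (Finset.mem_range.mp hi)
  · have hnotmem : (0:ℝ) ∉ (Finset.range n).image fun i => lam * (q⁻¹)^i := by
      intro h
      obtain ⟨i, _, hi⟩ := Finset.mem_image.mp h
      exact mul_ne_zero hlam (pow_ne_zero _ (inv_ne_zero hqne)) hi
    rw [Finset.card_insert_of_notMem hnotmem, Finset.card_image_of_injOn hinj,
      Finset.card_range]
    omega

/-- Lemma 4.3 (yum), as a polynomial identity in a commuting variable `b`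
(standing for `b_+`), with `ν = μ/λ`:
`(λ^{-1} b;q)_{α₂} = ∑_{γ₂=0}^{α₂} ν^{γ₂} (λ;q)_{γ₂}(ν;q)_{α₂-γ₂}/(μ;q)_{α₂}
   · binom_q(α₂,γ₂) (μ^{-1}b;q)_{γ₂} (q^{γ₂} b;q)_{α₂-γ₂}`. -/
theorem lemma_yum (q lam mu : ℝ) (hq0 : 0 < q) (hq1 : q < 1)
    (hlam : lam ≠ 0) (hmu : mu ≠ 0) (α2 : ℕ) (hden : qP q mu α2 ≠ 0)
    (b : ℝ) :
    qP q (lam⁻¹ * b) α2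
      = ∑ γ2 ∈ Finset.range (α2 + 1),
          (mu / lam) ^ γ2 *
            (qP q lam γ2 * qP q (mu / lam) (α2 - γ2) / qP q mu α2) *
            qBinom q α2 γ2 *
            (qP q (mu⁻¹ * b) γ2 * qP q (q ^ γ2 * b) (α2 - γ2)) := by
  have hmain := main_poly hq0 hq1 hlam hmu α2
  have hev := congrArg (Polynomial.eval b) hmain
  simp only [Polynomial.eval_mul, Polynomial.eval_C, Polynomial.eval_finset_sum,
    Pq_eval] at hev
  have hsum : ∑ γ2 ∈ Finset.range (α2 + 1),
        (mu / lam) ^ γ2 * (qP q lam γ2 * qP q (mu / lam) (α2 - γ2) / qP q mu α2) *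
          qBinom q α2 γ2 * (qP q (mu⁻¹ * b) γ2 * qP q (q ^ γ2 * b) (α2 - γ2))
      = (∑ γ2 ∈ Finset.range (α2 + 1), cc q lam mu α2 γ2 *
          (qP q (mu⁻¹ * b) γ2 * qP q (q ^ γ2 * b) (α2 - γ2))) / qP q mu α2 := by
    rw [Finset.sum_div]
    refine Finset.sum_congr rfl fun γ _ => ?_
    rw [cc, div_eq_mul_inv, div_eq_mul_inv]
    ring
  rw [hsum, ← hev, mul_div_cancel_left₀ _ hden]
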